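/- Let (C, E, s) be an extriangulated category satisfying Condition (WIC). Given a morphism of E-triangles (id_A, b, c) from A →x B →y C --δ--> to A →x' B' →y' C' --δ'-->, if c is a deflation then b is also a deflation. -/

import Mathlib

open CategoryTheory Limits

universe w v u

/-- An extriangulated category structure on an additive category `𝒞`, in the sense of
Nakaoka–Palu: a biadditive `Ab`-valued functor `E` together with an additive realization,
encoded via the predicate `IsTriangle x y δ` meaning that `A ⟶x B ⟶y X` realizes
`δ ∈ E(X,A)`, satisfying (ET1)–(ET4) and their duals. -/
structure ExtriangulatedStructure (𝒞 : Type u) [Category.{v} 𝒞] [Preadditive 𝒞]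
    [HasBinaryBiproducts 𝒞] where
  E : 𝒞 → 𝒞 → AddCommGrpCat.{w}
  pull : ∀ {X' X A : 𝒞}, (X' ⟶ X) → E X A → E X' A
  push : ∀ {X A A' : 𝒞}, (A ⟶ A') → E X A → E X A'
  pull_id : ∀ {X A : 𝒞} (δ : E X A), pull (𝟙 X) δ = δ
  push_id : ∀ {X A : 𝒞} (δ : E X A), push (𝟙 A) δ = δ
  pull_comp : ∀ {X'' X' X A : 𝒞} (c' : X'' ⟶ X') (c : X' ⟶ X) (δ : E X A),
      pull (c' ≫ c) δ = pull c' (pull c δ)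
  push_comp : ∀ {X A A' A'' : 𝒞} (a : A ⟶ A') (a' : A' ⟶ A'') (δ : E X A),
      push (a ≫ a') δ = push a' (push a δ)
  pull_push : ∀ {X' X A A' : 𝒞} (c : X' ⟶ X) (a : A ⟶ A') (δ : E X A),
      pull c (push a δ) = push a (pull c δ)
  pull_add : ∀ {X' X A : 𝒞} (c : X' ⟶ X) (δ δ' : E X A),
      pull c (δ + δ') = pull c δ + pull c δ'
  push_add : ∀ {X A A' : 𝒞} (a : A ⟶ A') (δ δ' : E X A),
      push a (δ + δ') = push a δ + push a δ'
  add_pull : ∀ {X' X A : 𝒞} (c c' : X' ⟶ X) (δ : E X A),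
      pull (c + c') δ = pull c δ + pull c' δ
  add_push : ∀ {X A A' : 𝒞} (a a' : A ⟶ A') (δ : E X A),
      push (a + a') δ = push a δ + push a' δ
  IsTriangle : ∀ {A B X : 𝒞}, (A ⟶ B) → (B ⟶ X) → E X A → Prop
  realize_exists : ∀ {X A : 𝒞} (δ : E X A),
      ∃ (B : 𝒞) (x : A ⟶ B) (y : B ⟶ X), IsTriangle x y δ
  realize_zero : ∀ (A X : 𝒞),
      IsTriangle (biprod.inl : A ⟶ A ⊞ X) (biprod.snd : A ⊞ X ⟶ X) (0 : E X A)
  realize_sum : ∀ {A B X A' B' X' : 𝒞} (x : A ⟶ B) (y : B ⟶ X) (δ : E X A)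
      (x' : A' ⟶ B') (y' : B' ⟶ X') (δ' : E X' A'),
      IsTriangle x y δ → IsTriangle x' y' δ' →
      IsTriangle (biprod.map x x') (biprod.map y y')
        (push biprod.inl (pull biprod.fst δ) + push biprod.inr (pull biprod.snd δ'))
  realize_iso : ∀ {A B B' X : 𝒞} (x : A ⟶ B) (y : B ⟶ X) (δ : E X A) (b : B ≅ B'),
      IsTriangle x y δ → IsTriangle (x ≫ b.hom) (b.inv ≫ y) δ
  realize_mor : ∀ {A B X A' B' X' : 𝒞} {x : A ⟶ B} {y : B ⟶ X} {δ : E X A}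
      {x' : A' ⟶ B'} {y' : B' ⟶ X'} {δ' : E X' A'} (a : A ⟶ A') (c : X ⟶ X'),
      IsTriangle x y δ → IsTriangle x' y' δ' → push a δ = pull c δ' →
      ∃ b : B ⟶ B', x ≫ b = a ≫ x' ∧ y ≫ c = b ≫ y'
  ET3 : ∀ {A B X A' B' X' : 𝒞} {x : A ⟶ B} {y : B ⟶ X} {δ : E X A}
      {x' : A' ⟶ B'} {y' : B' ⟶ X'} {δ' : E X' A'} (a : A ⟶ A') (b : B ⟶ B'),
      IsTriangle x y δ → IsTriangle x' y' δ' → x ≫ b = a ≫ x' →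
      ∃ c : X ⟶ X', push a δ = pull c δ' ∧ y ≫ c = b ≫ y'
  ET3op : ∀ {A B X A' B' X' : 𝒞} {x : A ⟶ B} {y : B ⟶ X} {δ : E X A}
      {x' : A' ⟶ B'} {y' : B' ⟶ X'} {δ' : E X' A'} (b : B ⟶ B') (c : X ⟶ X'),
      IsTriangle x y δ → IsTriangle x' y' δ' → y ≫ c = b ≫ y' →
      ∃ a : A ⟶ A', push a δ = pull c δ' ∧ x ≫ b = a ≫ x'
  ET4 : ∀ {A B D Cv F : 𝒞} (f : A ⟶ B) (f' : B ⟶ D) (δ : E D A)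
      (g : B ⟶ Cv) (g' : Cv ⟶ F) (δ' : E F B),
      IsTriangle f f' δ → IsTriangle g g' δ' →
      ∃ (E₀ : 𝒞) (h : A ⟶ Cv) (h' : Cv ⟶ E₀) (d : D ⟶ E₀) (e : E₀ ⟶ F) (δ'' : E E₀ A),
        IsTriangle h h' δ'' ∧ IsTriangle d e (push f' δ') ∧
        h = f ≫ g ∧ f' ≫ d = g ≫ h' ∧ g' = h' ≫ e ∧
        pull d δ'' = δ ∧ push f δ'' = pull e δ'
  ET4op : ∀ {D B A F Cv : 𝒞} (i : D ⟶ B) (p : B ⟶ A) (δ : E A D)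
      (j : F ⟶ Cv) (q : Cv ⟶ B) (δ' : E B F),
      IsTriangle i p δ → IsTriangle j q δ' →
      ∃ (E₀ : 𝒞) (i' : E₀ ⟶ Cv) (p' : Cv ⟶ A) (m : F ⟶ E₀) (n : E₀ ⟶ D) (δ'' : E A E₀),
        IsTriangle i' p' δ'' ∧ IsTriangle m n (pull i δ') ∧
        p' = q ≫ p ∧ i' ≫ q = n ≫ i ∧ j = m ≫ i' ∧
        push n δ'' = δ ∧ pull p δ'' = push m δ'

namespace ExtriangulatedStructure

variable {𝒞 : Type u} [Category.{v} 𝒞] [Preadditive 𝒞] [HasBinaryBiproducts 𝒞]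
variable (S : ExtriangulatedStructure.{w} 𝒞)

/-- A morphism is an inflation if it occurs as the first map of some `E`-triangle. -/
def IsInflation {A B : 𝒞} (f : A ⟶ B) : Prop :=
  ∃ (X : 𝒞) (g : B ⟶ X) (δ : S.E X A), S.IsTriangle f g δ

/-- A morphism is a deflation if it occurs as the second map of some `E`-triangle. -/
def IsDeflation {B X : 𝒞} (g : B ⟶ X) : Prop :=
  ∃ (A : 𝒞) (f : A ⟶ B) (δ : S.E X A), S.IsTriangle f g δ

/-- Condition (WIC). -/
def WIC : Prop :=
  (∀ {A B X : 𝒞} (f : A ⟶ B) (g : B ⟶ X), S.IsInflation (f ≫ g) → S.IsInflation f) ∧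
  (∀ {A B X : 𝒞} (f : A ⟶ B) (g : B ⟶ X), S.IsDeflation (f ≫ g) → S.IsDeflation g)

/-- `(a, b, c)` is a morphism of `E`-triangles. -/
def IsTriangleMor {A B X A' B' X' : 𝒞} (x : A ⟶ B) (y : B ⟶ X) (δ : S.E X A)
    (x' : A' ⟶ B') (y' : B' ⟶ X') (δ' : S.E X' A')
    (a : A ⟶ A') (b : B ⟶ B') (c : X ⟶ X') : Prop :=
  x ≫ b = a ≫ x' ∧ y ≫ c = b ≫ y' ∧ S.push a δ = S.pull c δ'

/-- A cotorsion pair `(𝒬, ℛ)`: `E(𝒬, ℛ) = 0` and every object admits the two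
approximation `E`-triangles. -/
def CotorsionPair (𝒬 ℛ : Set 𝒞) : Prop :=
  (∀ (Q R : 𝒞), Q ∈ 𝒬 → R ∈ ℛ → ∀ δ : S.E Q R, δ = 0) ∧
  (∀ X : 𝒞, ∃ (R Q : 𝒞) (f : R ⟶ Q) (g : Q ⟶ X) (δ : S.E X R),
      S.IsTriangle f g δ ∧ Q ∈ 𝒬 ∧ R ∈ ℛ) ∧
  (∀ X : 𝒞, ∃ (R Q : 𝒞) (f : X ⟶ R) (g : R ⟶ Q) (δ : S.E Q X),
      S.IsTriangle f g δ ∧ Q ∈ 𝒬 ∧ R ∈ ℛ)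

/-- A cotorsion pair is hereditary if `𝒬` is closed under cocones of deflations and
`ℛ` is closed under cones of inflations. -/
def Hereditary (𝒬 ℛ : Set 𝒞) : Prop :=
  (∀ {A B X : 𝒞} (f : A ⟶ B) (g : B ⟶ X) (δ : S.E X A),
      S.IsTriangle f g δ → B ∈ 𝒬 → X ∈ 𝒬 → A ∈ 𝒬) ∧
  (∀ {A B X : 𝒞} (f : A ⟶ B) (g : B ⟶ X) (δ : S.E X A),
      S.IsTriangle f g δ → A ∈ ℛ → B ∈ ℛ → X ∈ ℛ)

/-- A class of objects is thick: closed under direct summands and satisfying the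
2-out-of-3 property on `E`-triangles. -/
def Thick (𝒲 : Set 𝒞) : Prop :=
  (∀ {X Y : 𝒞}, Y ∈ 𝒲 → (∃ (i : X ⟶ Y) (p : Y ⟶ X), i ≫ p = 𝟙 X) → X ∈ 𝒲) ∧
  (∀ {A B X : 𝒞} (f : A ⟶ B) (g : B ⟶ X) (δ : S.E X A), S.IsTriangle f g δ →
    (A ∈ 𝒲 → B ∈ 𝒲 → X ∈ 𝒲) ∧ (A ∈ 𝒲 → X ∈ 𝒲 → B ∈ 𝒲) ∧ (B ∈ 𝒲 → X ∈ 𝒲 → A ∈ 𝒲))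

/-- `(𝒬, 𝒲, ℛ)` is a Hovey triple. -/
def HoveyTriple (𝒬 𝒲 ℛ : Set 𝒞) : Prop :=
  S.Thick 𝒲 ∧ S.CotorsionPair 𝒬 (𝒲 ∩ ℛ) ∧ S.CotorsionPair (𝒬 ∩ 𝒲) ℛ

end ExtriangulatedStructure

namespace ExtriangulatedStructure

variable {𝒞 : Type u} [Category.{v} 𝒞] [Preadditive 𝒞] [HasBinaryBiproducts 𝒞]
  {S : ExtriangulatedStructure.{w} 𝒞}

theorem IsTriangle.exists_eq_comp_of_comp_eq_zero {A B X T : 𝒞} {x : A ⟶ B} {y : B ⟶ X}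
    {δ : S.E X A} (hT : S.IsTriangle x y δ) (t : T ⟶ B) (ht : t ≫ y = 0) :
    ∃ u : T ⟶ A, t = u ≫ x := by
  obtain ⟨u, -, hu⟩ := S.ET3op (biprod.desc t 0) (0 : X ⟶ X) (S.realize_zero T X) hT
    (by ext <;> simp [ht])
  exact ⟨u, by simpa using hu⟩

theorem IsDeflation.comp {B X Y : 𝒞} {f : B ⟶ X} {g : X ⟶ Y}
    (hf : S.IsDeflation f) (hg : S.IsDeflation g) : S.IsDeflation (f ≫ g) := by
  obtain ⟨A, i, δ, hfT⟩ := hf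
  obtain ⟨K, k, ε, hgT⟩ := hg
  obtain ⟨E₀, i', p', -, -, δ'', hT, -, hp', -⟩ := S.ET4op k g ε i f δ hgT hfT
  exact ⟨E₀, i', δ'', hp' ▸ hT⟩

/-- A weak pullback of a deflation along `g`, obtained by realizing the pulled-back
extension `g^* δ`. -/
theorem IsDeflation.exists_isDeflation_comp_eq {B B' X : 𝒞} {d : B ⟶ X}
    (hd : S.IsDeflation d) (g : B' ⟶ X) :
    ∃ (P : 𝒞) (p : P ⟶ B') (s : P ⟶ B), S.IsDeflation p ∧ p ≫ g = s ≫ d := by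
  obtain ⟨K, i, δ, hT⟩ := hd
  obtain ⟨P, k, p, hP⟩ := S.realize_exists (S.pull g δ)
  obtain ⟨s, -, hs⟩ := S.realize_mor (𝟙 K) g hP hT (S.push_id _)
  exact ⟨P, p, s, ⟨K, k, _, hP⟩, hs⟩

end ExtriangulatedStructure

open CategoryTheory Limits in
/-- A weak pullback `p` of the deflation `b ≫ y' = y ≫ c` along `y'` differs from a map
factoring through `b` by a map killed by `y'`; such a map factors through `x' = x ≫ b`,
so `p` itself factors through `b`, and (WIC) makes `b` a deflation. -/
theorem stmt1 {𝒞 : Type u} [Category.{v} 𝒞] [Preadditive 𝒞] [HasBinaryBiproducts 𝒞]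
    (S : ExtriangulatedStructure.{w} 𝒞) (hWIC : S.WIC)
    {A B X B' X' : 𝒞} (x : A ⟶ B) (y : B ⟶ X) (δ : S.E X A)
    (x' : A ⟶ B') (y' : B' ⟶ X') (δ' : S.E X' A)
    (hT : S.IsTriangle x y δ) (hT' : S.IsTriangle x' y' δ')
    (b : B ⟶ B') (c : X ⟶ X')
    (hmor : S.IsTriangleMor x y δ x' y' δ' (𝟙 A) b c)
    (hc : S.IsDeflation c) : S.IsDeflation b := by
  obtain ⟨hxb, hyc, -⟩ := hmor
  rw [Category.id_comp] at hxb
  have hby' : S.IsDeflation (b ≫ y') :=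
    hyc ▸ ExtriangulatedStructure.IsDeflation.comp ⟨A, x, δ, hT⟩ hc
  obtain ⟨P, p, s, hp, hps⟩ := hby'.exists_isDeflation_comp_eq y'
  obtain ⟨u, hu⟩ := hT'.exists_eq_comp_of_comp_eq_zero (s ≫ b - p)
    (by rw [Preadditive.sub_comp, Category.assoc, hps, sub_self])
  have hp_eq : p = (s - u ≫ x) ≫ b := by
    rw [Preadditive.sub_comp, Category.assoc, hxb, ← hu]
    abel
  exact hWIC.2 _ b (hp_eq ▸ hp)
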